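/- With the grids G_ε defined by the Cartesian formula P(i,j,k) = i·(2,0,0) + j·(1,√3,0) + k·(0,0,√(8/3)) + S_k·(1,√(1/3),0) with S as above, any distinct grid points in consecutive layers k and k+1 are at distance at least 2, and each point of layer k has exactly 3 points of layer k+1 at distance exactly 2 from it. -/

import Mathlib

/-- Cartesian coordinates of the grid point with hexagonal coordinates `(i,j,k)`,
given the horizontal-shift function `S`. -/
noncomputable def hexPoint (S : ℤ → ℤ) (i j k : ℤ) : EuclideanSpace ℝ (Fin 3) :=
  i • (!₂[2, 0, 0] : EuclideanSpace ℝ (Fin 3)) +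
  j • (!₂[1, Real.sqrt 3, 0] : EuclideanSpace ℝ (Fin 3)) +
  k • (!₂[0, 0, Real.sqrt (8/3)] : EuclideanSpace ℝ (Fin 3)) +
  S k • (!₂[1, Real.sqrt (1/3), 0] : EuclideanSpace ℝ (Fin 3))

lemma hex0 (S : ℤ → ℤ) (i j k : ℤ) : hexPoint S i j k 0 = 2*i + j + S k := by
  simp [hexPoint]; ring

lemma hex1 (S : ℤ → ℤ) (i j k : ℤ) :
    hexPoint S i j k 1 = Real.sqrt 3 * j + Real.sqrt (1/3) * S k := by
  simp [hexPoint]; ring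

lemma hex2 (S : ℤ → ℤ) (i j k : ℤ) : hexPoint S i j k 2 = Real.sqrt (8/3) * k := by
  simp [hexPoint]; ring

lemma hex_dist_sq (S : ℤ → ℤ) (i₁ j₁ i₂ j₂ k : ℤ) :
    dist (hexPoint S i₁ j₁ k) (hexPoint S i₂ j₂ (k+1)) ^ 2 =
      ((2*(i₂-i₁) + (j₂-j₁) + (S (k+1) - S k) : ℤ) : ℝ)^2
      + 3*((j₂-j₁ : ℤ):ℝ)^2 + 2*((j₂-j₁:ℤ):ℝ)*((S (k+1) - S k:ℤ):ℝ)
      + ((S (k+1) - S k:ℤ):ℝ)^2/3 + 8/3 := by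
  rw [EuclideanSpace.dist_eq, Real.sq_sqrt (by positivity)]
  rw [Fin.sum_univ_three, hex0, hex0, hex1, hex1, hex2, hex2]
  have h3 : Real.sqrt 3 ^ 2 = 3 := Real.sq_sqrt (by norm_num)
  have h13 : Real.sqrt (1/3) ^ 2 = 1/3 := Real.sq_sqrt (by norm_num)
  have h83 : Real.sqrt (8/3) ^ 2 = 8/3 := Real.sq_sqrt (by norm_num)
  have h313 : Real.sqrt 3 * Real.sqrt (1/3) = 1 := by
    rw [← Real.sqrt_mul (by norm_num)]; norm_num
  simp only [Real.dist_eq, sq_abs]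
  push_cast
  nlinarith [h3, h13, h83, h313]

lemma hex_inj (S : ℤ → ℤ) (i₁ j₁ i₂ j₂ m : ℤ)
    (h : hexPoint S i₁ j₁ m = hexPoint S i₂ j₂ m) : i₁ = i₂ ∧ j₁ = j₂ := by
  have h1 : hexPoint S i₁ j₁ m 1 = hexPoint S i₂ j₂ m 1 := by rw [h]
  have h0 : hexPoint S i₁ j₁ m 0 = hexPoint S i₂ j₂ m 0 := by rw [h]
  rw [hex1, hex1] at h1
  rw [hex0, hex0] at h0
  have h3 : (0:ℝ) < Real.sqrt 3 := Real.sqrt_pos.mpr (by norm_num)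
  have hj : (j₁:ℝ) = j₂ :=
    mul_left_cancel₀ (ne_of_gt h3) (by linarith : Real.sqrt 3 * (j₁:ℝ) = Real.sqrt 3 * j₂)
  have hj' : j₁ = j₂ := by exact_mod_cast hj
  have hi : (i₁:ℝ) = i₂ := by rw [hj] at h0; linarith
  exact ⟨by exact_mod_cast hi, hj'⟩

lemma quad_nonneg (b s : ℤ) (hs : s = 1 ∨ s = -1) : 0 ≤ 3*b^2 + 2*b*s := by
  rcases hs with rfl | rfl <;> rcases le_or_gt 0 b with h | h <;> nlinarith

lemma hexKey (a b s : ℤ) (hs : s = 1 ∨ s = -1) :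
    1 ≤ (2*a+b+s)^2 + 3*b^2 + 2*b*s := by
  rcases Int.even_or_odd b with ⟨c, rfl⟩ | ⟨c, rfl⟩
  · have hq := quad_nonneg (c+c) s hs
    have hne : 2*a + (c+c) + s ≠ 0 := by rcases hs with rfl | rfl <;> omega
    have h1 : 1 ≤ (2*a+(c+c)+s)^2 := by
      rcases hne.lt_or_gt with h | h <;> nlinarith
    linarith
  · have h1 : 1 ≤ 3*(2*c+1)^2 + 2*(2*c+1)*s := by
      rcases hs with rfl | rfl <;> rcases le_or_gt 0 c with h | h <;> nlinarith
    nlinarith [sq_nonneg (2*a+(2*c+1)+s)]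

lemma hexSolve (a b s : ℤ) (hs : s = 1 ∨ s = -1)
    (h : (2*a+b+s)^2 + 3*b^2 + 2*b*s = 1) :
    (b = 0 ∧ (2*a + s = 1 ∨ 2*a + s = -1)) ∨ (b = -s ∧ a = 0) := by
  have hq0 : 0 ≤ 3*b^2 + 2*b*s := quad_nonneg b s hs
  have hX1 : 2*a+b+s ≤ 1 := by nlinarith [sq_nonneg (2*a+b+s)]
  have hX2 : -1 ≤ 2*a+b+s := by nlinarith [sq_nonneg (2*a+b+s)]
  have hb1 : b ≤ 1 ∧ -1 ≤ b := by
    constructor <;> rcases hs with rfl | rfl <;> nlinarith [sq_nonneg (2*a+b+1), sq_nonneg (2*a+b-1)]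
  rcases hs with rfl | rfl
  · have hb : b = -1 ∨ b = 0 ∨ b = 1 := by omega
    rcases hb with rfl | rfl | rfl
    · exact Or.inr ⟨by norm_num, by omega⟩
    · exact Or.inl ⟨rfl, by omega⟩
    · exfalso; nlinarith [sq_nonneg (2*a+1+1)]
  · have hb : b = -1 ∨ b = 0 ∨ b = 1 := by omega
    rcases hb with rfl | rfl | rfl
    · exfalso; nlinarith [sq_nonneg (2*a+(-1)+(-1))]
    · exact Or.inl ⟨rfl, by omega⟩
    · exact Or.inr ⟨by norm_num, by omega⟩

lemma hex_dist_eq_two_iff (S : ℤ → ℤ) (i j i' j' k : ℤ)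
    (hs : S (k+1) - S k = 1 ∨ S (k+1) - S k = -1) :
    dist (hexPoint S i j k) (hexPoint S i' j' (k+1)) = 2 ↔
    (2*(i'-i)+(j'-j)+(S (k+1)-S k))^2 + 3*(j'-j)^2 + 2*(j'-j)*(S (k+1)-S k) = 1 := by
  have hd := hex_dist_sq S i j i' j' k
  have hs2 : ((S (k+1) - S k : ℤ):ℝ)^2 = 1 := by
    rcases hs with h | h <;> rw [h] <;> norm_num
  constructor
  · intro h
    have h4 : dist (hexPoint S i j k) (hexPoint S i' j' (k+1)) ^ 2 = 4 := by
      rw [h]; norm_num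
    have hr : ((2*(i'-i) + (j'-j) + (S (k+1) - S k) : ℤ) : ℝ)^2
        + 3*((j'-j : ℤ):ℝ)^2 + 2*((j'-j:ℤ):ℝ)*((S (k+1) - S k:ℤ):ℝ) = 1 := by
      rw [hd] at h4; linarith
    exact_mod_cast hr
  · intro h
    have hr : ((2*(i'-i) + (j'-j) + (S (k+1) - S k) : ℤ) : ℝ)^2
        + 3*((j'-j : ℤ):ℝ)^2 + 2*((j'-j:ℤ):ℝ)*((S (k+1) - S k:ℤ):ℝ) = 1 := by
      exact_mod_cast h
    have h4 : dist (hexPoint S i j k) (hexPoint S i' j' (k+1)) ^ 2 = 4 := by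
      rw [hd]; linarith
    have h0 := dist_nonneg (x := hexPoint S i j k) (y := hexPoint S i' j' (k+1))
    nlinarith [h4, h0]

theorem consecutive_layer_contacts (ε S : ℤ → ℤ)
    (hε0 : ε 0 = 0) (hε : ∀ k : ℤ, k ≠ 0 → ε k = 1 ∨ ε k = -1)
    (hS0 : S 0 = 0)
    (hSpos : ∀ k : ℤ, 0 < k → S k = ∑ t ∈ Finset.Icc 1 k, ε t)
    (hSneg : ∀ k : ℤ, k < 0 → S k = ∑ t ∈ Finset.Icc k (-1), ε t)
    (k : ℤ) :
    (∀ i₁ j₁ i₂ j₂ : ℤ, hexPoint S i₁ j₁ k ≠ hexPoint S i₂ j₂ (k + 1) →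
        2 ≤ dist (hexPoint S i₁ j₁ k) (hexPoint S i₂ j₂ (k + 1))) ∧
    (∀ i j : ℤ,
        {q | (∃ i' j' : ℤ, q = hexPoint S i' j' (k + 1)) ∧
            dist (hexPoint S i j k) q = 2}.ncard = 3) := by
  -- the step of S is always ±1
  have hstep : S (k+1) - S k = 1 ∨ S (k+1) - S k = -1 := by
    rcases lt_trichotomy k 0 with hm | rfl | hm
    · by_cases hm1 : k = -1
      · subst hm1
        rw [show (-1:ℤ) + 1 = 0 by norm_num, hS0, hSneg (-1) (by norm_num),
          Finset.Icc_self, Finset.sum_singleton]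
        rcases hε (-1) (by norm_num) with h | h <;> omega
      · rw [hSneg k hm, hSneg (k+1) (by omega)]
        have hins : Finset.Icc k (-1) = insert k (Finset.Icc (k+1) (-1)) := by
          ext x; simp only [Finset.mem_Icc, Finset.mem_insert]; omega
        rw [hins, Finset.sum_insert (by simp only [Finset.mem_Icc]; omega)]
        rcases hε k (by omega) with h | h <;> omega
    · rw [hS0, show (0:ℤ)+1 = 1 by norm_num, hSpos 1 one_pos, Finset.Icc_self,
        Finset.sum_singleton]
      rcases hε 1 one_ne_zero with h | h <;> omega
    · rw [hSpos k hm, hSpos (k+1) (by omega)]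
      have hins : Finset.Icc 1 (k+1) = insert (k+1) (Finset.Icc 1 k) := by
        ext x; simp only [Finset.mem_Icc, Finset.mem_insert]; omega
      rw [hins, Finset.sum_insert (by simp only [Finset.mem_Icc]; omega)]
      rcases hε (k+1) (by omega) with h | h <;> omega
  constructor
  · intro i₁ j₁ i₂ j₂ _
    have hkey := hexKey (i₂-i₁) (j₂-j₁) (S (k+1) - S k) hstep
    have hkeyR : (1:ℝ) ≤ ((2*(i₂-i₁) + (j₂-j₁) + (S (k+1) - S k) : ℤ) : ℝ)^2
        + 3*((j₂-j₁ : ℤ):ℝ)^2 + 2*((j₂-j₁:ℤ):ℝ)*((S (k+1) - S k:ℤ):ℝ) := by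
      exact_mod_cast hkey
    have hs2 : ((S (k+1) - S k : ℤ):ℝ)^2 = 1 := by
      rcases hstep with h | h <;> rw [h] <;> norm_num
    have h4 : 4 ≤ dist (hexPoint S i₁ j₁ k) (hexPoint S i₂ j₂ (k+1)) ^ 2 := by
      rw [hex_dist_sq]; linarith
    have h0 := dist_nonneg (x := hexPoint S i₁ j₁ k) (y := hexPoint S i₂ j₂ (k+1))
    nlinarith [h4, h0]
  · intro i j
    have hset : ∀ i' j' : ℤ,
        (dist (hexPoint S i j k) (hexPoint S i' j' (k+1)) = 2 ↔
          (2*(i'-i)+(j'-j)+(S (k+1)-S k))^2 + 3*(j'-j)^2 + 2*(j'-j)*(S (k+1)-S k) = 1) :=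
      fun i' j' => hex_dist_eq_two_iff S i j i' j' k hstep
    rcases hstep with h1 | h1
    · have e : {q | (∃ i' j' : ℤ, q = hexPoint S i' j' (k + 1)) ∧
            dist (hexPoint S i j k) q = 2} =
          {hexPoint S i j (k+1), hexPoint S (i-1) j (k+1), hexPoint S i (j-1) (k+1)} := by
        ext q
        simp only [Set.mem_setOf_eq, Set.mem_insert_iff, Set.mem_singleton_iff]
        constructor
        · rintro ⟨⟨i', j', rfl⟩, hdq⟩
          rw [hset i' j', h1] at hdq
          rcases hexSolve (i'-i) (j'-j) 1 (Or.inl rfl) hdq with ⟨hb, h2⟩ | ⟨hb, ha⟩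
          · rcases h2 with h2 | h2
            · have hi : i' = i := by omega
              have hj : j' = j := by omega
              subst hi; subst hj; exact Or.inl rfl
            · have hi : i' = i - 1 := by omega
              have hj : j' = j := by omega
              subst hi; subst hj; exact Or.inr (Or.inl rfl)
          · have hi : i' = i := by omega
            have hj : j' = j - 1 := by omega
            subst hi; subst hj; exact Or.inr (Or.inr rfl)
        · rintro (rfl | rfl | rfl)
          · exact ⟨⟨i, j, rfl⟩, by rw [hset i j, h1]; ring⟩
          · exact ⟨⟨i-1, j, rfl⟩, by rw [hset (i-1) j, h1]; ring⟩
          · exact ⟨⟨i, j-1, rfl⟩, by rw [hset i (j-1), h1]; ring⟩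
      rw [e]
      refine Set.ncard_eq_three.mpr ⟨_, _, _, ?_, ?_, ?_, rfl⟩
      · intro h; have := hex_inj S _ _ _ _ _ h; omega
      · intro h; have := hex_inj S _ _ _ _ _ h; omega
      · intro h; have := hex_inj S _ _ _ _ _ h; omega
    · have e : {q | (∃ i' j' : ℤ, q = hexPoint S i' j' (k + 1)) ∧
            dist (hexPoint S i j k) q = 2} =
          {hexPoint S i j (k+1), hexPoint S (i+1) j (k+1), hexPoint S i (j+1) (k+1)} := by
        ext q
        simp only [Set.mem_setOf_eq, Set.mem_insert_iff, Set.mem_singleton_iff]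
        constructor
        · rintro ⟨⟨i', j', rfl⟩, hdq⟩
          rw [hset i' j', h1] at hdq
          rcases hexSolve (i'-i) (j'-j) (-1) (Or.inr rfl) hdq with ⟨hb, h2⟩ | ⟨hb, ha⟩
          · rcases h2 with h2 | h2
            · have hi : i' = i + 1 := by omega
              have hj : j' = j := by omega
              subst hi; subst hj; exact Or.inr (Or.inl rfl)
            · have hi : i' = i := by omega
              have hj : j' = j := by omega
              subst hi; subst hj; exact Or.inl rfl
          · have hi : i' = i := by omega
            have hj : j' = j + 1 := by omega
            subst hi; subst hj; exact Or.inr (Or.inr rfl)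
        · rintro (rfl | rfl | rfl)
          · exact ⟨⟨i, j, rfl⟩, by rw [hset i j, h1]; ring⟩
          · exact ⟨⟨i+1, j, rfl⟩, by rw [hset (i+1) j, h1]; ring⟩
          · exact ⟨⟨i, j+1, rfl⟩, by rw [hset i (j+1), h1]; ring⟩
      rw [e]
      refine Set.ncard_eq_three.mpr ⟨_, _, _, ?_, ?_, ?_, rfl⟩
      · intro h; have := hex_inj S _ _ _ _ _ h; omega
      · intro h; have := hex_inj S _ _ _ _ _ h; omega
      · intro h; have := hex_inj S _ _ _ _ _ h; omega
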